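/- Let W_1 = T_0 e_0 + T_1 e_1 be the generic element of weight one in the shuffle algebra over ℚ[T_0, T_1]. Then x = (1 - W_1)^{-1} = ∑_{n≥0} W_1^n satisfies, and is up to the choice x_0 = 1 the unique power series solution with nonzero constant term to, the equation x ⧢ W_1 = x · W_1 · x, where ⧢ is the shuffle product and · is concatenation. -/

import Mathlib

open MvPolynomial

/-- The subword of `w` given by the positions in `S` (taken in increasing order). -/
def extract (w : List (Fin 2)) (S : Finset ℕ) : List (Fin 2) :=
  ((w.zipIdx.map Prod.swap).filter (fun q => q.1 ∈ S)).map Prod.snd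

/-- Shuffle product of noncommutative series (coefficientwise: sum over all
ways of splitting the positions of `w` into two complementary subwords). -/
def shMul {R : Type*} [CommSemiring R] (u v : List (Fin 2) → R) : List (Fin 2) → R :=
  fun w => ∑ S ∈ (Finset.range w.length).powerset,
    u (extract w S) * v (extract w ((Finset.range w.length) \ S))

/-- Concatenation product of noncommutative series. -/
def convMul {R : Type*} [Semiring R] (u v : List (Fin 2) → R) : List (Fin 2) → R :=
  fun w => ∑ i ∈ Finset.range (w.length + 1), u (w.take i) * v (w.drop i)

/-- The generic weight-one element `W₁ = T₀ e₀ + T₁ e₁` over `ℚ[T₀,T₁]`. -/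
noncomputable def W1 : List (Fin 2) → MvPolynomial (Fin 2) ℚ :=
  fun w => if w = [(0 : Fin 2)] then X 0 else if w = [(1 : Fin 2)] then X 1 else 0

/-- The geometric series `(1 - W₁)⁻¹ = ∑_{n≥0} W₁ⁿ`, whose coefficient at a word
`w` is `T₀^{#e₀(w)} · T₁^{#e₁(w)}`. -/
noncomputable def geomW1 : List (Fin 2) → MvPolynomial (Fin 2) ℚ :=
  fun w => X 0 ^ (w.count (0 : Fin 2)) * X 1 ^ (w.count (1 : Fin 2))

/-!
The geometric series is multiplicative for concatenation, and every multiplicative series `P`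
solves `x ⧢ W₁ = x W₁ x`: deleting the letter at position `i` of `w` leaves
`w.take i ++ w.drop (i + 1)`.

For uniqueness, compare a solution `y` with the multiplicative series `P` built from its
weight-one part, by induction on the length. On a word `a :: (s ++ [z])` the two outer terms of
the equation cancel, and the interior terms of `x W₁ x` only involve shorter words, on which
`y = P`; so `h s := (y - P) (a :: (s ++ [z]))` satisfies `h ⧢ W₁ = 0` in the relevant degree. Shuffling with
`W₁` is injective degreewise: if `h (aʳ v) ≠ 0` with `r` maximal, the coefficient of `aʳ⁺¹ v`
in `h ⧢ W₁` is `(r + 1) T_a h (aʳ v) ≠ 0`.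
-/

open Finset

/-- `extract w S = extractBy w (· ∈ S)`; a predicate rather than a finset lets `extractBy`
recurse on `w` with the shifted predicate. -/
def extractBy {α : Type*} (w : List α) (p : ℕ → Bool) : List α :=
  ((w.zipIdx.map Prod.swap).filter (fun q => p q.1)).map Prod.snd

section extractBy

variable {α : Type*}

lemma extractBy_cons (a : α) (w : List α) (p : ℕ → Bool) :
    extractBy (a :: w) p = (if p 0 then [a] else []) ++ extractBy w (fun i => p (i + 1)) := by
  cases h : p 0 <;> simp [extractBy, List.zipIdx_succ, List.filter_map, Function.comp_def, h]

lemma extractBy_congr {w : List α} {p q : ℕ → Bool} (h : ∀ i < w.length, p i = q i) :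
    extractBy w p = extractBy w q := by
  induction w generalizing p q with
  | nil => rfl
  | cons a w ih =>
    rw [extractBy_cons, extractBy_cons, h 0 (by simp),
      ih fun i hi => h (i + 1) (by simpa using hi)]

lemma length_extractBy (w : List α) (p : ℕ → Bool) :
    (extractBy w p).length = #{i ∈ range w.length | p i} := by
  induction w generalizing p with
  | nil => rfl
  | cons a w ih =>
    rw [extractBy_cons, List.length_append, ih, card_filter, card_filter, List.length_cons,
      sum_range_succ' _ w.length]
    cases p 0 <;> simp [add_comm]

lemma extractBy_eq_eraseIdx (w : List α) (i : ℕ) : extractBy w (· ≠ i) = w.eraseIdx i := by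
  induction w generalizing i with
  | nil => rfl
  | cons a w ih =>
    cases i with
    | zero =>
      rw [extractBy_cons]
      simp [extractBy, Function.comp_def]
    | succ i => simp [extractBy_cons, ← ih i]

lemma extractBy_eq_singleton {w : List α} {i : ℕ} (hi : i < w.length) (d : α) :
    extractBy w (· = i) = [w.getD i d] := by
  induction w generalizing i with
  | nil => simp at hi
  | cons a w ih =>
    cases i with
    | zero =>
      rw [extractBy_cons]
      simp [extractBy]
    | succ i => simpa [extractBy_cons] using ih (by simpa using hi)

end extractBy

lemma extract_eq_extractBy (w : List (Fin 2)) (S : Finset ℕ) :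
    extract w S = extractBy w (· ∈ S) := rfl

lemma length_extract (w : List (Fin 2)) {S : Finset ℕ} (hS : S ⊆ range w.length) :
    (extract w S).length = #S := by
  rw [extract_eq_extractBy, length_extractBy]
  simp only [decide_eq_true_eq]
  rw [filter_mem_eq_inter, inter_eq_right.2 hS]

lemma extract_singleton {w : List (Fin 2)} {i : ℕ} (hi : i < w.length) :
    extract w {i} = [w.getD i 0] := by
  rw [extract_eq_extractBy]
  simp only [mem_singleton]
  exact extractBy_eq_singleton hi 0

lemma extract_range_sdiff_singleton (w : List (Fin 2)) (i : ℕ) :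
    extract w (range w.length \ {i}) = w.eraseIdx i := by
  rw [extract_eq_extractBy, ← extractBy_eq_eraseIdx]
  exact extractBy_congr fun j hj => by simp [hj]

lemma W1_singleton (a : Fin 2) : W1 [a] = X a := by
  fin_cases a <;> simp [W1]

lemma W1_eq_zero_of_length_ne_one {l : List (Fin 2)} (h : l.length ≠ 1) : W1 l = 0 := by
  unfold W1
  split_ifs with h0 h1 <;> simp_all

lemma shMul_W1 (y : List (Fin 2) → MvPolynomial (Fin 2) ℚ) (w : List (Fin 2)) :
    shMul y W1 w = ∑ i ∈ range w.length, y (w.eraseIdx i) * X (w.getD i 0) := by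
  have sum_compl : ∑ S ∈ (range w.length).powerset,
      y (extract w S) * W1 (extract w (range w.length \ S)) =
      ∑ T ∈ (range w.length).powerset,
        y (extract w (range w.length \ T)) * W1 (extract w T) := by
    refine sum_nbij' (range w.length \ ·) (range w.length \ ·) (by simp) (by simp)
      (fun S hS => Finset.sdiff_sdiff_eq_self (mem_powerset.1 hS))
      (fun S hS => Finset.sdiff_sdiff_eq_self (mem_powerset.1 hS)) fun S hS => ?_
    rw [Finset.sdiff_sdiff_eq_self (mem_powerset.1 hS)]
  rw [shMul, sum_compl, sum_powerset, sum_eq_single 1, powersetCard_one, sum_map]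
  · refine sum_congr rfl fun i hi => ?_
    simp [extract_singleton (mem_range.1 hi), extract_range_sdiff_singleton, W1_singleton]
  · intro k _ hk
    refine sum_eq_zero fun T hT => ?_
    rw [mem_powersetCard] at hT
    rw [W1_eq_zero_of_length_ne_one (by rw [length_extract w hT.1, hT.2]; exact hk), mul_zero]
  · intro h
    rw [powersetCard_eq_empty.2 (by simpa using h), sum_empty]

lemma convMul_W1_nil (y : List (Fin 2) → MvPolynomial (Fin 2) ℚ) : convMul y W1 [] = 0 := by
  simp [convMul, W1]

lemma convMul_W1_concat (y : List (Fin 2) → MvPolynomial (Fin 2) ℚ) (u : List (Fin 2))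
    (a : Fin 2) : convMul y W1 (u ++ [a]) = y u * X a := by
  rw [convMul, sum_eq_single_of_mem u.length (by simp)]
  · simp [W1_singleton]
  · intro i hi hne
    rw [W1_eq_zero_of_length_ne_one (by simp at hi ⊢; omega), mul_zero]

lemma convMul_convMul_W1 (y z : List (Fin 2) → MvPolynomial (Fin 2) ℚ) (w : List (Fin 2)) :
    convMul (convMul y W1) z w =
      ∑ i ∈ range w.length, y (w.take i) * X (w.getD i 0) * z (w.drop (i + 1)) := by
  rw [convMul, sum_range_succ', List.take_zero, convMul_W1_nil, zero_mul, add_zero]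
  refine sum_congr rfl fun i hi => ?_
  have hi : i < w.length := mem_range.1 hi
  rw [List.take_add_one, List.getElem?_eq_getElem hi, Option.toList_some, convMul_W1_concat,
    List.getD_eq_getElem _ _ hi]

lemma shMul_W1_eq_convMul_of_append_eq_mul {P : List (Fin 2) → MvPolynomial (Fin 2) ℚ}
    (hP : ∀ u v, P (u ++ v) = P u * P v) : shMul P W1 = convMul (convMul P W1) P := by
  funext w
  rw [shMul_W1, convMul_convMul_W1]
  refine sum_congr rfl fun i _ => ?_
  rw [List.eraseIdx_eq_take_drop_succ, hP]
  ring

lemma geomW1_append (u v : List (Fin 2)) : geomW1 (u ++ v) = geomW1 u * geomW1 v := by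
  simp only [geomW1, List.count_append, pow_add]
  ring

lemma sum_interior_eraseIdx_eq {y : List (Fin 2) → MvPolynomial (Fin 2) ℚ} (hy0 : y [] = 1)
    (hy : shMul y W1 = convMul (convMul y W1) y) (a z : Fin 2) (s : List (Fin 2)) :
    ∑ j ∈ range s.length, y (a :: (s.eraseIdx j ++ [z])) * X (s.getD j 0) =
      ∑ j ∈ range s.length, y (a :: s.take j) * X (s.getD j 0) * y (s.drop (j + 1) ++ [z]) := by
  have h := congrFun hy (a :: (s ++ [z]))
  have hlen : (a :: (s ++ [z])).length = s.length + 1 + 1 := by simp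
  rw [shMul_W1, convMul_convMul_W1, hlen] at h
  simp only [sum_range_succ _ (s.length + 1), sum_range_succ' _ s.length] at h
  have hL : ∀ j ∈ range s.length, y ((a :: (s ++ [z])).eraseIdx (j + 1)) *
      X ((a :: (s ++ [z])).getD (j + 1) 0) = y (a :: (s.eraseIdx j ++ [z])) * X (s.getD j 0) := by
    intro j hj
    have hj : j < s.length := mem_range.1 hj
    rw [List.eraseIdx_cons_succ, List.eraseIdx_append_of_lt_length hj, List.getD_cons_succ,
      List.getD_append _ _ _ _ hj]
  have hR : ∀ j ∈ range s.length, y ((a :: (s ++ [z])).take (j + 1)) *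
      X ((a :: (s ++ [z])).getD (j + 1) 0) * y ((a :: (s ++ [z])).drop (j + 1 + 1)) =
        y (a :: s.take j) * X (s.getD j 0) * y (s.drop (j + 1) ++ [z]) := by
    intro j hj
    have hj : j < s.length := mem_range.1 hj
    rw [List.take_succ_cons, List.take_append_of_le_length hj.le, List.getD_cons_succ,
      List.getD_append _ _ _ _ hj, List.drop_succ_cons, List.drop_append_of_le_length hj]
  rw [sum_congr rfl hL, sum_congr rfl hR] at h
  have hfirst : y ((a :: (s ++ [z])).eraseIdx 0) * X ((a :: (s ++ [z])).getD 0 0) =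
      y ((a :: (s ++ [z])).take 0) * X ((a :: (s ++ [z])).getD 0 0) *
        y ((a :: (s ++ [z])).drop (0 + 1)) := by
    simp [hy0, mul_comm]
  have hlast : y ((a :: (s ++ [z])).eraseIdx (s.length + 1)) *
      X ((a :: (s ++ [z])).getD (s.length + 1) 0) =
      y ((a :: (s ++ [z])).take (s.length + 1)) * X ((a :: (s ++ [z])).getD (s.length + 1) 0) *
        y ((a :: (s ++ [z])).drop (s.length + 1 + 1)) := by
    rw [List.eraseIdx_cons_succ, List.eraseIdx_append_of_length_le le_rfl]
    simp [hy0]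
  linear_combination h - hfirst - hlast

theorem eq_zero_of_sum_eraseIdx_mul_eq_zero {R : Type*} [Semiring R] [NoZeroDivisors R]
    [CharZero R] {t : Fin 2 → R} {a : Fin 2} (ha : t a ≠ 0) {h : List (Fin 2) → R} {m : ℕ}
    (H : ∀ s : List (Fin 2), s.length = m + 1 →
      ∑ j ∈ range s.length, h (s.eraseIdx j) * t (s.getD j 0) = 0)
    (u : List (Fin 2)) (hu : u.length = m) : h u = 0 := by
  suffices key : ∀ n (v : List (Fin 2)) (r : ℕ), v.length = n → r + n = m →
      h (List.replicate r a ++ v) = 0 by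
    simpa using key m u 0 hu (zero_add m)
  intro n
  induction n using Nat.strong_induction_on with
  | _ n ih =>
  intro v r hv hrn
  have hs := H (List.replicate (r + 1) a ++ v)
    (by simp only [List.length_append, List.length_replicate]; omega)
  rw [List.length_append, List.length_replicate, sum_range_add] at hs
  have hhead : ∀ j ∈ range (r + 1), h ((List.replicate (r + 1) a ++ v).eraseIdx j) *
      t ((List.replicate (r + 1) a ++ v).getD j 0) = h (List.replicate r a ++ v) * t a := by
    intro j hj
    have hj : j < r + 1 := mem_range.1 hj
    rw [List.eraseIdx_append_of_lt_length (by simpa using hj), List.eraseIdx_replicate,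
      if_pos hj, List.getD_append _ _ _ _ (by simpa using hj), List.getD_replicate (x := a) hj,
      Nat.add_sub_cancel]
  have htail : ∀ i ∈ range v.length, h ((List.replicate (r + 1) a ++ v).eraseIdx (r + 1 + i)) *
      t ((List.replicate (r + 1) a ++ v).getD (r + 1 + i) 0) = 0 := by
    intro i hi
    have hi : i < v.length := mem_range.1 hi
    have hlen : (v.eraseIdx i).length = v.length - 1 := List.length_eraseIdx_of_lt hi
    rw [List.eraseIdx_append_of_length_le (by simp), List.length_replicate,
      Nat.add_sub_cancel_left, ih _ (by omega) _ (r + 1) rfl (by omega), zero_mul]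
  rw [sum_congr rfl hhead, sum_congr rfl htail, sum_const_zero, add_zero, sum_const, card_range,
    nsmul_eq_mul] at hs
  simpa [ha, Nat.cast_add_one_ne_zero] using hs

lemma cons_append_singleton_eq_of_forall_length_le {y P : List (Fin 2) → MvPolynomial (Fin 2) ℚ}
    (hy0 : y [] = 1) (hP0 : P [] = 1) (hy : shMul y W1 = convMul (convMul y W1) y)
    (hP : shMul P W1 = convMul (convMul P W1) P) {k : ℕ}
    (hle : ∀ u : List (Fin 2), u.length ≤ k + 1 → y u = P u) (a z : Fin 2) (s : List (Fin 2))
    (hs : s.length = k) : y (a :: (s ++ [z])) = P (a :: (s ++ [z])) := by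
  have H : ∀ s' : List (Fin 2), s'.length = k + 1 → ∑ j ∈ range s'.length,
      (y (a :: (s'.eraseIdx j ++ [z])) - P (a :: (s'.eraseIdx j ++ [z]))) * X (s'.getD j 0) =
        0 := by
    intro s' hs'
    simp only [sub_mul, sum_sub_distrib, sum_interior_eraseIdx_eq hy0 hy,
      sum_interior_eraseIdx_eq hP0 hP]
    refine sub_eq_zero.2 (sum_congr rfl fun j hj => ?_)
    have hj := mem_range.1 hj
    rw [hle _ (by simp only [List.length_cons, List.length_take]; omega),
      hle _ (by simp only [List.length_append, List.length_drop, List.length_singleton]; omega)]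
  exact sub_eq_zero.1 (eq_zero_of_sum_eraseIdx_mul_eq_zero (X_ne_zero 0)
    (h := fun s => y (a :: (s ++ [z])) - P (a :: (s ++ [z]))) H s hs)

theorem eq_of_shMul_W1_eq {y P : List (Fin 2) → MvPolynomial (Fin 2) ℚ} (hy0 : y [] = 1)
    (hP0 : P [] = 1) (hy : shMul y W1 = convMul (convMul y W1) y)
    (hP : shMul P W1 = convMul (convMul P W1) P) (h1 : ∀ a, y [a] = P [a]) : y = P := by
  funext w
  induction hn : w.length using Nat.strong_induction_on generalizing w with
  | _ n ih =>
  rcases w with _ | ⟨a, w⟩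
  · rw [hy0, hP0]
  rcases w.eq_nil_or_concat' with rfl | ⟨s, z, rfl⟩
  · exact h1 a
  refine cons_append_singleton_eq_of_forall_length_le hy0 hP0 hy hP
    (fun u hu => ih u.length ?_ u rfl) a z s rfl
  simp only [List.length_cons, List.length_append] at hn
  omega

/-- `(1 - W₁)⁻¹` satisfies `x ⧢ W₁ = x · W₁ · x`, and any solution of this
equation with constant coefficient `1` is the geometric series of its
weight-one part. -/
theorem stmt_8 :
    shMul geomW1 W1 = convMul (convMul geomW1 W1) geomW1 ∧
      ∀ y : List (Fin 2) → MvPolynomial (Fin 2) ℚ,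
        y [] = 1 → shMul y W1 = convMul (convMul y W1) y →
          ∀ w : List (Fin 2), y w = (w.map (fun a => y [a])).prod := by
  refine ⟨shMul_W1_eq_convMul_of_append_eq_mul geomW1_append, fun y hy0 hy => congrFun ?_⟩
  exact eq_of_shMul_W1_eq (P := fun w => (w.map fun a => y [a]).prod) hy0 rfl hy
    (shMul_W1_eq_convMul_of_append_eq_mul fun u v => by simp) fun a => by simp
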